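/- arXiv:math/0609001 — 5 statements merged into one kernel-verified Lean document; each statement's English description precedes it below -/
import Mathlib

section
/- The interchange operation repairs violations of the separation condition: if two adjacent clusters (x, i), (y, j) with x > y satisfy x - y < r_{ij} + χ(i > j), where r_{ij} = 2·min(i,j) and χ is the indicator function, then after interchange the new adjacent pair (y + r_{ij}, j), (x - r_{ij}, i) satisfies (y + r_{ij}) - (x - r_{ij}) ≥ r_{ij} + χ(j > i). -/
/-- the interchange operation repairs violations of the separation
condition. -/
theorem stmt5 (x y i j : ℤ) (hi : 1 ≤ i) (hj : 1 ≤ j) (hxy : y < x)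
    (hviol : x - y < 2 * min i j + (if j < i then 1 else 0)) :
    2 * min i j + (if i < j then 1 else 0) ≤ (y + 2 * min i j) - (x - 2 * min i j) := by
  rcases lt_trichotomy i j with h|h|h <;> simp [h, min_def, le_of_lt, not_lt_of_gt] at * <;> omega
end

section
/- Concatenation unfolding for well-separated equal-charge clusters: let j ≥ 1 and let x = js + r, y = js' + r' with 0 ≤ r, r' < j and x - y ≥ 2j. Then the concatenation of the unfoldings (r copies of s+1, j-r copies of s, r' copies of s'+1, j-r' copies of s') is a weakly decreasing sequence satisfying p_l - p_{l+j} ≥ 2 for all valid l. -/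
/-- for two clusters of equal charge j with weights x = js + r and
y = js' + r' and x - y ≥ 2j, the concatenation of their unfoldings is weakly
decreasing and satisfies p_l - p_{l+j} ≥ 2. -/
theorem stmt9 (j s s' r r' : ℕ) (hj : 1 ≤ j) (hr : r < j) (hr' : r' < j)
    (x y : ℕ) (hx : x = j * s + r) (hy : y = j * s' + r') (hsep : y + 2 * j ≤ x) :
    (∀ a b : Fin (2 * j), a ≤ b →
      (fun l : Fin (2 * j) =>
          if (l : ℕ) < r then s + 1
          else if (l : ℕ) < j then s
          else if (l : ℕ) < j + r' then s' + 1
          else s') b ≤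
        (fun l : Fin (2 * j) =>
          if (l : ℕ) < r then s + 1
          else if (l : ℕ) < j then s
          else if (l : ℕ) < j + r' then s' + 1
          else s') a) ∧
    (∀ l : ℕ, ∀ h : l + j < 2 * j,
      (fun t : ℕ =>
          if t < r then s + 1
          else if t < j then s
          else if t < j + r' then s' + 1
          else s') (l + j) + 2 ≤
        (fun t : ℕ =>
          if t < r then s + 1
          else if t < j then s
          else if t < j + r' then s' + 1
          else s') l) := by
  subst hx hy
  have hs1 : s' + 2 ≤ s := by
    by_contra h
    push_neg at h
    have hle : s ≤ s' + 1 := by omega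
    have := Nat.mul_le_mul_left j hle
    rw [Nat.mul_add, Nat.mul_one] at this
    omega
  have hs2 : s = s' + 2 → r' ≤ r := by
    intro he
    subst he
    have : j * (s' + 2) = j * s' + 2 * j := by ring
    omega
  constructor
  · intro a b hab
    have hab' : (a : ℕ) ≤ (b : ℕ) := hab
    simp only
    split_ifs <;> omega
  · intro l h
    simp only
    rcases (by omega : s = s' + 2 ∨ s' + 3 ≤ s) with h1 | h1
    · have hrr := hs2 h1
      split_ifs <;> omega
    · split_ifs <;> omega
end

section
/- If x = is + r with 0 ≤ r < i and y = js' + r' with 0 ≤ r' < j, i < j, and s > s' + 2, then the concatenation of the unfoldings of (x,i) and (y,j) — namely r copies of s+1, i-r copies of s, r' copies of s'+1, j-r' copies of s' — is weakly decreasing and satisfies p_l - p_{l+j} ≥ 2 for all indices l with l + j within range. -/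
/-- for clusters (x,i), (y,j) with i < j, x = is + r, y = js' + r' and
s > s' + 2, the concatenation of their unfoldings (r copies of s+1, i-r copies of s,
r' copies of s'+1, j-r' copies of s') is weakly decreasing and satisfies
p_l - p_{l+j} ≥ 2. -/
theorem stmt10 (i j s s' r r' : ℕ) (hij : i < j) (hi : 1 ≤ i)
    (hr : r < i) (hr' : r' < j) (hs : s' + 2 < s)
    (x y : ℕ) (hx : x = i * s + r) (hy : y = j * s' + r') :
    (∀ a b : Fin (i + j), a ≤ b →
      (fun l : Fin (i + j) =>
          if (l : ℕ) < r then s + 1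
          else if (l : ℕ) < i then s
          else if (l : ℕ) < i + r' then s' + 1
          else s') b ≤
        (fun l : Fin (i + j) =>
          if (l : ℕ) < r then s + 1
          else if (l : ℕ) < i then s
          else if (l : ℕ) < i + r' then s' + 1
          else s') a) ∧
    (∀ l : ℕ, ∀ h : l + j < i + j,
      (fun t : ℕ =>
          if t < r then s + 1
          else if t < i then s
          else if t < i + r' then s' + 1
          else s') (l + j) + 2 ≤
        (fun t : ℕ =>
          if t < r then s + 1
          else if t < i then s
          else if t < i + r' then s' + 1
          else s') l) := by
  constructor
  · intro a b hab
    have hab' : (a : ℕ) ≤ (b : ℕ) := hab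
    simp only
    split_ifs <;> omega
  · intro l h
    simp only
    split_ifs <;> omega
end

section
/- Minimal x-coordinate of a peak: in a restricted lattice path starting at height k - i (with 1 ≤ i ≤ k) using steps (x,y) → (x+1, max(0, y-1)) or (x,y) → (x+1, y+1), any peak of charge j has x-coordinate at least j + max(j - i + 1, 0). -/
/-- A lattice path in the first quadrant: heights after each step, starting at
height k - i, ending on the x-axis after T steps, with moves
α : (x,y) → (x+1, max 0 (y-1)) and β : (x,y) → (x+1, y+1). -/
structure LPath (k i : ℕ) where
  T : ℕ
  h : ℕ → ℕ
  start : h 0 = k - i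
  ends : h T = 0
  step : ∀ t, t < T → h (t + 1) = h t + 1 ∨ h (t + 1) = h t - 1

/-- A peak: a point preceded by a β step and followed by an α step. -/
def LPath.IsPeak {k i : ℕ} (P : LPath k i) (t : ℕ) : Prop :=
  0 < t ∧ t < P.T ∧ P.h t = P.h (t - 1) + 1 ∧ P.h (t + 1) = P.h t - 1

/-- c is witnessed as a charge bound for the peak at x-coordinate t: there are points
(t', h t - c) and (t'', h t - c) with t' < t < t'', no intervening peak of height
greater than h t, and every intervening peak of height h t has x-coordinate ≥ t. -/
def LPath.ChargeW {k i : ℕ} (P : LPath k i) (t c : ℕ) : Prop :=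
  c ≤ P.h t ∧ ∃ t' t'' : ℕ, t' < t ∧ t < t'' ∧ t'' ≤ P.T ∧
    P.h t' = P.h t - c ∧ P.h t'' = P.h t - c ∧
    (∀ u, t' < u → u < t'' → P.IsPeak u → P.h u ≤ P.h t) ∧
    (∀ u, t' < u → u < t'' → P.IsPeak u → P.h u = P.h t → t ≤ u)

/-- The charge of a peak: the largest c witnessed as above. -/
noncomputable def LPath.charge {k i : ℕ} (P : LPath k i) (t : ℕ) : ℕ :=
  sSup {c : ℕ | P.ChargeW t c}

lemma LPath.lip {k i : ℕ} (P : LPath k i) (a : ℕ) :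
    ∀ b, a ≤ b → b ≤ P.T →
      P.h a ≤ P.h b + (b - a) ∧ P.h b ≤ P.h a + (b - a) := by
  intro b
  induction b with
  | zero =>
    intro h1 _
    have : a = 0 := by omega
    subst this; simp
  | succ n ih =>
    intro h1 h2
    rcases Nat.eq_or_lt_of_le h1 with heq | hlt
    · rw [heq]; omega
    · have ha : a ≤ n := by omega
      have hs := P.step n (by omega)
      have := ih ha (by omega)
      omega

/-- in a restricted lattice path starting at height k - i, a peak of
charge j has x-coordinate at least j + max (j - i + 1) 0. -/
theorem stmt13 (k i j : ℕ) (hi : 1 ≤ i) (hik : i ≤ k)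
    (P : LPath k i) (hres : ∀ t, P.IsPeak t → P.h t ≤ k - 1)
    (t : ℕ) (hp : P.IsPeak t) (hc : P.charge t = j) :
    j + (j + 1 - i) ≤ t := by
  rcases Nat.eq_zero_or_pos j with hj | hj
  · subst hj; omega
  -- the witnessed set is nonempty (else sSup = 0 ≠ j) and bounded, so j is witnessed
  have hne : {c : ℕ | P.ChargeW t c}.Nonempty := by
    by_contra hemp
    rw [Set.not_nonempty_iff_eq_empty] at hemp
    have : P.charge t = 0 := by
      unfold LPath.charge; rw [hemp]; exact csSup_empty
    omega
  have hbdd : BddAbove {c : ℕ | P.ChargeW t c} := ⟨P.h t, fun c hc => hc.1⟩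
  have hmem : P.ChargeW t j := by
    have := Nat.sSup_mem hne hbdd
    rwa [show sSup {c : ℕ | P.ChargeW t c} = j from hc] at this
  obtain ⟨hjle, t', t'', ht'lt, htlt, ht''T, ht', _, _, _⟩ := hmem
  have hT : t ≤ P.T := le_of_lt hp.2.1
  have h1 := P.lip t' t (le_of_lt ht'lt) hT
  have h2 := P.lip 0 t' (Nat.zero_le _) (by omega)
  have h3 := hres t hp
  have h0 := P.start
  omega
end

section
/- Lower bound on entries of the multiple partition: if (n^{(1)}, ..., n^{(k-1)}) satisfies n^{(j)}_l ≥ n^{(j)}_{l+1} + 2j and n^{(j)}_{m_j} ≥ Δ_{(i;j)} := j + max(j-i+1, 0) + 2j(m_{j+1} + ... + m_{k-1}), then the total weight n = Σ_{j,l} n^{(j)}_l satisfies n ≥ Σ_{j=1}^{k-1} [ j·m_j(m_j - 1) + m_j·Δ_{(i;j)} ] = N_1² + ... + N_{k-1}² + N_i + ... + N_{k-1}, where N_j = m_j + m_{j+1} + ... + m_{k-1}. -/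
open Finset

lemma sum_g_lb (m e Δ : ℕ) (g : ℕ → ℕ)
    (hgap : ∀ l, l + 1 < m → g (l+1) + 2*e ≤ g l)
    (hlast : 0 < m → Δ ≤ g (m-1)) :
    e * m * (m-1) + m * Δ ≤ ∑ l ∈ range m, g l := by
  have key : ∀ t l, l < m → m - 1 - l = t → Δ + 2*e*t ≤ g l := by
    intro t
    induction t with
    | zero =>
      intro l hl ht
      have hl' : l = m - 1 := by omega
      subst hl'
      simpa using hlast (by omega)
    | succ t ih =>
      intro l hl ht
      have h1 : l + 1 < m := by omega
      have h2 := ih (l+1) (by omega) (by omega)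
      have h3 := hgap l h1
      calc Δ + 2*e*(t+1) = (Δ + 2*e*t) + 2*e := by ring
        _ ≤ g (l+1) + 2*e := by omega
        _ ≤ g l := h3
  have hle : ∀ l ∈ range m, Δ + 2*e*(m-1-l) ≤ g l := fun l hl =>
    key (m-1-l) l (mem_range.mp hl) rfl
  have hsum : ∑ l ∈ range m, (Δ + 2*e*(m-1-l)) = e * m * (m-1) + m * Δ := by
    rw [Finset.sum_add_distrib, Finset.sum_const, ← Finset.mul_sum]
    have h1 : ∑ l ∈ range m, (m-1-l) = ∑ l ∈ range m, l :=
      Finset.sum_range_reflect (fun l => l) m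
    rw [h1]
    have h2 := Finset.sum_range_id_mul_two m
    simp only [card_range, smul_eq_mul]
    calc m * Δ + 2 * e * ∑ l ∈ range m, l
        = m * Δ + e * ((∑ l ∈ range m, l) * 2) := by ring
      _ = e * m * (m-1) + m * Δ := by rw [h2]; ring
  exact hsum ▸ Finset.sum_le_sum hle

lemma key_id (n i : ℕ) (hi : 1 ≤ i) (f : ℕ → ℕ) :
    ∑ j ∈ range n, ((j+1) * f j * (f j - 1) +
      f j * ((j+1) + ((j+1)+1-i) + 2*(j+1) * (∑ j' ∈ (range n).filter (fun j' => j < j'), f j'))) =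
    ∑ j ∈ range n, (∑ j' ∈ (range n).filter (fun j' => j ≤ j'), f j') ^ 2 +
      ∑ j ∈ (range n).filter (fun j => i ≤ j + 1),
        (∑ j' ∈ (range n).filter (fun j' => j ≤ j'), f j') := by
  set N : ℕ → ℕ := fun j => ∑ j' ∈ (range n).filter (fun j' => j ≤ j'), f j' with hN
  set S : ℕ → ℕ := fun j => ∑ j' ∈ (range n).filter (fun j' => j < j'), f j' with hS
  have hSN : ∀ j, S j = N (j+1) := by
    intro j
    apply Finset.sum_congr _ (fun _ _ => rfl)
    apply Finset.filter_congr
    intro x _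
    omega
  have hNn : N n = 0 := by
    apply Finset.sum_eq_zero
    intro x hx
    simp only [mem_filter, mem_range] at hx
    omega
  have hNfS : ∀ j ∈ range n, N j = f j + S j := by
    intro j hj
    rw [mem_range] at hj
    have hfil : (range n).filter (fun j' => j ≤ j') =
        insert j ((range n).filter (fun j' => j < j')) := by
      ext x
      simp only [mem_filter, mem_range, mem_insert]
      omega
    rw [hN, hS]
    beta_reduce
    rw [hfil, Finset.sum_insert (by simp)]
  -- Step A: rewrite each term
  have stepA : ∀ j ∈ range n,
      (j+1) * f j * (f j - 1) + f j * ((j+1) + ((j+1)+1-i) + 2*(j+1) * S j) =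
      (j+1) * (f j)^2 + 2*(j+1) * f j * S j + f j * ((j+1)+1-i) := by
    intro j _
    rcases Nat.eq_zero_or_pos (f j) with h | h
    · simp [h]
    · obtain ⟨t, ht⟩ : ∃ t, f j = t + 1 := ⟨f j - 1, by omega⟩
      rw [ht]
      simp only [Nat.add_sub_cancel]
      ring
  rw [Finset.sum_congr rfl stepA]
  -- split
  rw [Finset.sum_add_distrib]
  -- Step B: ∑ (j+1)f² + 2(j+1)fS = ∑ N²
  have stepB : ∑ j ∈ range n, ((j+1) * (f j)^2 + 2*(j+1) * f j * S j) =
      ∑ j ∈ range n, (N j)^2 := by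
    have e1 : ∑ j ∈ range n, (j+1) * (N j)^2 =
        ∑ j ∈ range n, ((j+1) * (f j)^2 + 2*(j+1) * f j * S j) +
          ∑ j ∈ range n, (j+1) * (S j)^2 := by
      rw [← Finset.sum_add_distrib]
      apply Finset.sum_congr rfl
      intro j hj
      rw [hNfS j hj]
      ring
    have e2 : ∑ j ∈ range n, (j+1) * (S j)^2 = ∑ j ∈ range n, j * (N j)^2 := by
      have : ∀ j ∈ range n, (j+1) * (S j)^2 = (j+1) * (N (j+1))^2 := by
        intro j _; rw [hSN]
      rw [Finset.sum_congr rfl this]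
      have e3 : ∑ j ∈ range (n+1), j * (N j)^2
          = ∑ j ∈ range n, (j+1) * (N (j+1))^2 + 0 * (N 0)^2 :=
        Finset.sum_range_succ' (fun j => j * (N j)^2) n
      have e4 : ∑ j ∈ range (n+1), j * (N j)^2
          = ∑ j ∈ range n, j * (N j)^2 + n * (N n)^2 :=
        Finset.sum_range_succ (fun j => j * (N j)^2) n
      rw [hNn] at e4
      simp at e3 e4
      omega
    have e5 : ∑ j ∈ range n, (j+1) * (N j)^2 =
        ∑ j ∈ range n, (N j)^2 + ∑ j ∈ range n, j * (N j)^2 := by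
      rw [← Finset.sum_add_distrib]
      apply Finset.sum_congr rfl
      intro j _; ring
    omega
  rw [stepB]
  -- Step C
  have stepC : ∑ j ∈ range n, f j * ((j+1)+1-i) =
      ∑ j ∈ (range n).filter (fun j => i ≤ j + 1), N j := by
    have r1 : ∑ j ∈ (range n).filter (fun j => i ≤ j + 1), N j =
        ∑ j ∈ range n, ∑ j' ∈ range n, (if i ≤ j+1 ∧ j ≤ j' then f j' else 0) := by
      rw [Finset.sum_filter]
      apply Finset.sum_congr rfl
      intro j _
      split_ifs with h
      · rw [hN]; beta_reduce
        rw [Finset.sum_filter]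
        apply Finset.sum_congr rfl
        intro j' _
        simp [h]
      · symm
        apply Finset.sum_eq_zero
        intro j' _
        simp [h]
    rw [r1, Finset.sum_comm]
    apply Finset.sum_congr rfl
    intro j' hj'
    rw [mem_range] at hj'
    have hfil : (range n).filter (fun j => i ≤ j+1 ∧ j ≤ j') = Finset.Icc (i-1) j' := by
      ext x
      simp only [mem_filter, mem_range, Finset.mem_Icc]
      omega
    symm
    calc ∑ j ∈ range n, (if i ≤ j+1 ∧ j ≤ j' then f j' else 0)
        = ∑ j ∈ (range n).filter (fun j => i ≤ j+1 ∧ j ≤ j'), f j' := by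
          rw [Finset.sum_filter]
      _ = (Finset.Icc (i-1) j').card * f j' := by rw [hfil, Finset.sum_const, smul_eq_mul]
      _ = f j' * ((j'+1)+1-i) := by
          rw [Nat.card_Icc]
          have : j' + 1 - (i-1) = (j'+1)+1-i := by omega
          rw [this, Nat.mul_comm]
  rw [stepC]

lemma fin_filter_sum (n : ℕ) (G : Fin n → ℕ) (H : ℕ → ℕ) (hGH : ∀ j : Fin n, G j = H j.val)
    (p : Fin n → Prop) [DecidablePred p] (q : ℕ → Prop) [DecidablePred q]
    (hpq : ∀ j : Fin n, p j ↔ q j.val) :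
    ∑ j ∈ Finset.univ.filter p, G j = ∑ t ∈ (range n).filter q, H t := by
  rw [Finset.sum_filter, Finset.sum_filter,
    ← Fin.sum_univ_eq_sum_range (fun t => if q t then H t else 0) n]
  apply Finset.sum_congr rfl
  intro j _
  by_cases h : p j
  · rw [if_pos h, if_pos ((hpq j).mp h), hGH]
  · rw [if_neg h, if_neg (fun hc => h ((hpq j).mpr hc))]

/-- lower bound on the total weight of a multiple partition:
n ≥ Σ_j [ j·m_j(m_j-1) + m_j·Δ_{(i;j)} ] = N₁² + ⋯ + N_{k-1}² + N_i + ⋯ + N_{k-1},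
where N_j = m_j + ⋯ + m_{k-1} and Δ_{(i;j)} = j + max(j-i+1,0) + 2j(m_{j+1}+⋯+m_{k-1}). -/
theorem stmt16 (k i : ℕ) (hk : 2 ≤ k) (hi1 : 1 ≤ i) (hik : i ≤ k)
    (mv : Fin (k - 1) → ℕ) (nn : (j : Fin (k - 1)) → Fin (mv j) → ℕ)
    (hpos : ∀ j : Fin (k - 1), ∀ l : Fin (mv j), 1 ≤ nn j l)
    (hgap : ∀ j : Fin (k - 1), ∀ l : Fin (mv j), ∀ h : l.val + 1 < mv j,
      nn j ⟨l.val + 1, h⟩ + 2 * (j.val + 1) ≤ nn j l)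
    (hlast : ∀ j : Fin (k - 1), ∀ h : 0 < mv j,
      (j.val + 1) + ((j.val + 1) + 1 - i) +
          2 * (j.val + 1) *
            (∑ j' ∈ Finset.univ.filter (fun j' : Fin (k - 1) => j < j'), mv j') ≤
        nn j ⟨mv j - 1, by omega⟩) :
    (∑ j : Fin (k - 1),
        ((j.val + 1) * mv j * (mv j - 1) +
          mv j * ((j.val + 1) + ((j.val + 1) + 1 - i) +
            2 * (j.val + 1) *
              (∑ j' ∈ Finset.univ.filter (fun j' : Fin (k - 1) => j < j'), mv j')))) ≤
      (∑ j : Fin (k - 1), ∑ l : Fin (mv j), nn j l) ∧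
    (∑ j : Fin (k - 1),
        ((j.val + 1) * mv j * (mv j - 1) +
          mv j * ((j.val + 1) + ((j.val + 1) + 1 - i) +
            2 * (j.val + 1) *
              (∑ j' ∈ Finset.univ.filter (fun j' : Fin (k - 1) => j < j'), mv j')))) =
      (∑ j : Fin (k - 1),
          (∑ j' ∈ Finset.univ.filter (fun j' : Fin (k - 1) => j ≤ j'), mv j') ^ 2) +
        (∑ j ∈ Finset.univ.filter (fun j : Fin (k - 1) => i ≤ j.val + 1),
          (∑ j' ∈ Finset.univ.filter (fun j' : Fin (k - 1) => j ≤ j'), mv j')) := by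
  have hF : ∃ F : ℕ → ℕ, ∀ j : Fin (k-1), mv j = F j.val :=
    ⟨fun t => if h : t < k - 1 then mv ⟨t, h⟩ else 0, fun j => by simp [j.isLt]⟩
  obtain ⟨F, hF⟩ := hF
  have hS_lt : ∀ j : Fin (k-1),
      ∑ j' ∈ Finset.univ.filter (fun j' : Fin (k-1) => j < j'), mv j' =
      ∑ t ∈ (range (k-1)).filter (fun t => j.val < t), F t := fun j =>
    fin_filter_sum (k-1) mv F hF _ _ (fun j' => Iff.rfl)
  have hS_le : ∀ j : Fin (k-1),
      ∑ j' ∈ Finset.univ.filter (fun j' : Fin (k-1) => j ≤ j'), mv j' =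
      ∑ t ∈ (range (k-1)).filter (fun t => j.val ≤ t), F t := fun j =>
    fin_filter_sum (k-1) mv F hF _ _ (fun j' => Iff.rfl)
  constructor
  · -- inequality
    apply Finset.sum_le_sum
    intro j _
    have hb := sum_g_lb (mv j) (j.val + 1)
      ((j.val + 1) + ((j.val + 1) + 1 - i) +
        2 * (j.val + 1) *
          (∑ j' ∈ Finset.univ.filter (fun j' : Fin (k - 1) => j < j'), mv j'))
      (fun t => if h : t < mv j then nn j ⟨t, h⟩ else 0)
      (by
        intro l hl
        have h1 : l < mv j := by omega
        simp only [dif_pos hl, dif_pos h1]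
        exact hgap j ⟨l, h1⟩ hl)
      (by
        intro hm
        have h2 : mv j - 1 < mv j := by omega
        simp only [dif_pos h2]
        exact hlast j hm)
    have hsum : ∑ l : Fin (mv j), nn j l =
        ∑ t ∈ range (mv j), (fun t => if h : t < mv j then nn j ⟨t, h⟩ else 0) t := by
      rw [← Fin.sum_univ_eq_sum_range (fun t => if h : t < mv j then nn j ⟨t, h⟩ else 0) (mv j)]
      apply Finset.sum_congr rfl
      intro l _
      simp [l.isLt]
    rw [hsum]
    exact hb
  · -- identity
    have key := key_id (k-1) i hi1 F
    have L : ∑ j : Fin (k - 1),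
        ((j.val + 1) * mv j * (mv j - 1) +
          mv j * ((j.val + 1) + ((j.val + 1) + 1 - i) +
            2 * (j.val + 1) *
              (∑ j' ∈ Finset.univ.filter (fun j' : Fin (k - 1) => j < j'), mv j'))) =
        ∑ t ∈ range (k-1), ((t + 1) * F t * (F t - 1) +
          F t * ((t + 1) + ((t + 1) + 1 - i) +
            2 * (t + 1) * (∑ j' ∈ (range (k-1)).filter (fun j' => t < j'), F j'))) := by
      rw [← Fin.sum_univ_eq_sum_range (fun t => (t + 1) * F t * (F t - 1) +
          F t * ((t + 1) + ((t + 1) + 1 - i) +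
            2 * (t + 1) * (∑ j' ∈ (range (k-1)).filter (fun j' => t < j'), F j'))) (k-1)]
      apply Finset.sum_congr rfl
      intro j _
      rw [hF j, hS_lt j]
    have R1 : ∑ j : Fin (k - 1),
        (∑ j' ∈ Finset.univ.filter (fun j' : Fin (k - 1) => j ≤ j'), mv j') ^ 2 =
        ∑ t ∈ range (k-1), (∑ j' ∈ (range (k-1)).filter (fun j' => t ≤ j'), F j') ^ 2 := by
      rw [← Fin.sum_univ_eq_sum_range
        (fun t => (∑ j' ∈ (range (k-1)).filter (fun j' => t ≤ j'), F j') ^ 2) (k-1)]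
      apply Finset.sum_congr rfl
      intro j _
      rw [hS_le j]
    have R2 : ∑ j ∈ Finset.univ.filter (fun j : Fin (k - 1) => i ≤ j.val + 1),
        (∑ j' ∈ Finset.univ.filter (fun j' : Fin (k - 1) => j ≤ j'), mv j') =
        ∑ t ∈ (range (k-1)).filter (fun t => i ≤ t + 1),
          (∑ j' ∈ (range (k-1)).filter (fun j' => t ≤ j'), F j') :=
      fin_filter_sum (k-1) _ _ hS_le _ _ (fun j => Iff.rfl)
    rw [L, R1, R2]
    exact key
end
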